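/- Let n, s, m be integers with 1 ≤ s ≤ n and 0 ≤ m ≤ n, and let p_ss, p_as ∈ [0,1]. Let B ∈ ℝ^{n×n} be a circulant matrix (each column the cyclic shift by one of the previous column) that is (s−1)-tolerant, meaning err(A_v) = 0 whenever the weight of v ∈ {0,1}^n is at least n−s+1, where A_v is the submatrix of B with columns at positions where v equals 1 and err(A) := min over x of ‖Ax − 1_n‖₂². Suppose m designated slow workers straggle independently with probability p_ss and the remaining n−m active workers straggle independently with probability p_as, and independently a uniformly random permutation shuffles the columns of B among the workers; let V ∈ {0,1}^n be the (random) non-straggler pattern of column indices. For each r ∈ {0,…,n}, partition the set of weight-r vectors in {0,1}^n into its cycle classes (orbits under cyclic shift), let {v_1,…,v_{N_r}} be any choice of one representative per cycle class and e_1,…,e_{N_r} the corresponding orbit sizes. Then E[err(A_V)] = Σ_{r=0}^{n−s} P_r · Σ_{i=1}^{N_r} (e_i / C(n,r)) · err(A_{v_i}), where P_r = Σ_{i=0}^{r} C(m,i) C(n−m, r−i) (1−p_ss)^i p_ss^{m−i} (1−p_as)^{r−i} p_as^{n−m−r+i}. -/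

import Mathlib

/-- `err(A_v) = min_{x} ‖A_v x − 1_n‖₂²` where `A_v` is the submatrix of `B`
formed by the columns `j` with `v j = true`. -/
noncomputable def errCols {n : ℕ} (B : Fin n → Fin n → ℝ) (v : Fin n → Bool) : ℝ :=
  sInf {e : ℝ | ∃ x : Fin n → ℝ,
    e = ∑ i : Fin n,
      ((∑ j ∈ Finset.univ.filter (fun j => v j = true), x j * B i j) - 1) ^ 2}

/-- The cyclic shift by one position: `σ(v)_j = v_{j−1}` (indices mod `n`). -/
def cycShift (n : ℕ) [NeZero n] (v : Fin n → Bool) : Fin n → Bool :=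
  fun j => v (j - 1)

/-- Hamming weight of `v ∈ {0,1}^n`. -/
def hWeight {n : ℕ} (v : Fin n → Bool) : ℕ :=
  (Finset.univ.filter (fun j => v j = true)).card

/-- The cycle class (orbit under the cyclic-shift action) of `v`. -/
def cycOrbit (n : ℕ) [NeZero n] (v : Fin n → Bool) : Finset (Fin n → Bool) :=
  (Finset.range n).image (fun k => (cycShift n)^[k] v)

/-!
Since `B` is circulant, `errCols B` is invariant under the cyclic shift, hence constant on cycle
classes, and its sum over the weight-`r` vectors is `∑ᵢ eᵢ · err(A_{vᵢ})`. Since the shuffle is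
uniform and independent of the stragglers, given `r` non-stragglers the pattern `V` is uniform on
the `C(n, r)` vectors of weight `r`: the symmetric group acts transitively on them. So the
expectation is `∑ᵣ P(r non-stragglers) · (average of err over weight r)`, and the law of the
number of non-stragglers is the coefficient sequence of
`∏ᵢ (pᵢ + (1 - pᵢ) X) = (p_ss + (1 - p_ss) X)^m (p_as + (1 - p_as) X)^(n - m)`, which is `P_r`.
Tolerance kills the terms with `r > n - s`.
-/

open Finset

section Weight

variable {n : ℕ}

lemma hWeight_eq_card_subtype (v : Fin n → Bool) :
    hWeight v = Fintype.card {j // v j = true} :=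
  (Fintype.card_subtype _).symm

lemma hWeight_le (v : Fin n → Bool) : hWeight v ≤ n :=
  (card_filter_le _ _).trans (card_fin n).le

lemma hWeight_comp_perm (v : Fin n → Bool) (σ : Equiv.Perm (Fin n)) :
    hWeight (fun j => v (σ j)) = hWeight v := by
  simp only [hWeight_eq_card_subtype]
  exact Fintype.card_congr (σ.subtypeEquiv fun _ => Iff.rfl)

lemma exists_perm_comp_eq_of_hWeight_eq {v w : Fin n → Bool} (h : hWeight v = hWeight w) :
    ∃ σ : Equiv.Perm (Fin n), ∀ j, w (σ j) = v j := by
  have hpos : Fintype.card {j // v j = true} = Fintype.card {j // w j = true} := by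
    rwa [← hWeight_eq_card_subtype, ← hWeight_eq_card_subtype]
  have hneg : Fintype.card {j // ¬v j = true} = Fintype.card {j // ¬w j = true} := by
    rw [Fintype.card_subtype_compl, Fintype.card_subtype_compl, hpos]
  obtain ⟨e⟩ := Fintype.card_eq.mp hpos
  obtain ⟨f⟩ := Fintype.card_eq.mp hneg
  refine ⟨Equiv.subtypeCongr e f, fun j => ?_⟩
  by_cases hj : v j = true
  · simpa [Equiv.subtypeCongr, Equiv.sumCompl_symm_apply_of_pos hj, hj] using (e ⟨j, hj⟩).2
  · simpa [Equiv.subtypeCongr, Equiv.sumCompl_symm_apply_of_neg hj, hj] using (f ⟨j, hj⟩).2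

lemma card_filter_hWeight_eq (r : ℕ) :
    #{v : Fin n → Bool | hWeight v = r} = n.choose r := by
  rw [show n.choose r = #(powersetCard r (univ : Finset (Fin n))) by simp]
  refine card_nbij' (fun v => ({j | v j = true} : Finset (Fin n))) (fun T j => decide (j ∈ T))
    ?_ ?_ ?_ ?_ <;> intro x hx <;>
    simp only [coe_filter, mem_coe, mem_powersetCard, subset_univ, Set.mem_ofPred_eq,
      true_and] at hx ⊢
  · simpa [hWeight] using hx
  · simpa [hWeight] using hx
  · funext j; simp
  · ext j; simp

end Weight

section Shuffle

variable {n : ℕ} {M : Type*} [AddCommMonoid M]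

lemma sum_perm_comp_symm_eq_of_hWeight_eq (f : (Fin n → Bool) → M) {u w : Fin n → Bool}
    (h : hWeight w = hWeight u) :
    ∑ π : Equiv.Perm (Fin n), f (fun j => w (π.symm j))
      = ∑ π : Equiv.Perm (Fin n), f (fun j => u (π.symm j)) := by
  obtain ⟨σ, hσ⟩ := exists_perm_comp_eq_of_hWeight_eq h
  refine Fintype.sum_equiv (Equiv.mulRight σ⁻¹) _ _ fun π => congrArg f (funext fun j => ?_)
  simp [Equiv.Perm.mul_def, Equiv.Perm.inv_def, hσ]

lemma choose_smul_sum_perm_comp_symm (f : (Fin n → Bool) → M) (u : Fin n → Bool) :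
    n.choose (hWeight u) • ∑ π : Equiv.Perm (Fin n), f (fun j => u (π.symm j))
      = n.factorial • ∑ v with hWeight v = hWeight u, f v := by
  calc n.choose (hWeight u) • ∑ π : Equiv.Perm (Fin n), f (fun j => u (π.symm j))
      = ∑ w with hWeight w = hWeight u, ∑ π : Equiv.Perm (Fin n), f (fun j => w (π.symm j)) := by
        rw [sum_congr rfl fun w hw =>
          sum_perm_comp_symm_eq_of_hWeight_eq f (mem_filter.mp hw).2, sum_const,
          card_filter_hWeight_eq]
    _ = ∑ π : Equiv.Perm (Fin n), ∑ w with hWeight w = hWeight u, f (fun j => w (π.symm j)) :=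
        sum_comm
    _ = ∑ _π : Equiv.Perm (Fin n), ∑ v with hWeight v = hWeight u, f v := by
        refine Fintype.sum_congr _ _ fun π => ?_
        refine sum_equiv (π.arrowCongr (Equiv.refl Bool)) (fun w => ?_) fun w _ => rfl
        simp only [mem_filter, mem_univ, true_and]
        exact (hWeight_comp_perm w π.symm).symm ▸ Iff.rfl
    _ = n.factorial • ∑ v with hWeight v = hWeight u, f v := by
        rw [sum_const, card_univ, Fintype.card_perm, Fintype.card_fin]

end Shuffle

section CyclicShift

variable {n : ℕ} [NeZero n]

open Fin.NatCast Fin.CommRing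

lemma cycShift_iterate_apply (k : ℕ) (v : Fin n → Bool) (j : Fin n) :
    (cycShift n)^[k] v j = v (j - k) := by
  induction k generalizing j with
  | zero => simp
  | succ k ih =>
    rw [Function.iterate_succ_apply', cycShift, ih]
    congr 1
    push_cast
    ring

lemma isPeriodicPt_cycShift (v : Fin n → Bool) : Function.IsPeriodicPt (cycShift n) n v :=
  funext fun j => by simp [cycShift_iterate_apply]

lemma mem_cycOrbit_iff {v w : Fin n → Bool} :
    w ∈ cycOrbit n v ↔ ∃ k : ℕ, (cycShift n)^[k] v = w := by
  simp only [cycOrbit, mem_image, mem_range]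
  refine ⟨fun ⟨k, _, hk⟩ => ⟨k, hk⟩, fun ⟨k, hk⟩ => ⟨k % n, Nat.mod_lt _ n.pos_of_neZero, ?_⟩⟩
  rw [(isPeriodicPt_cycShift v).iterate_mod_apply, hk]

lemma hWeight_comp_cycShift : hWeight ∘ cycShift n = hWeight :=
  funext fun v => hWeight_comp_perm v (Equiv.subRight 1)

end CyclicShift

section Orbits

variable {n : ℕ} [NeZero n] {M : Type*} [AddCommMonoid M]

lemma exists_cycShift_iterate_eq_of_mem_cycOrbit {v w a : Fin n → Bool}
    (hv : a ∈ cycOrbit n v) (hw : a ∈ cycOrbit n w) :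
    ∃ k : ℕ, (cycShift n)^[k] v = w := by
  obtain ⟨kv, -, rfl⟩ := mem_image.mp hv
  obtain ⟨kw, hkw, hkwa⟩ := mem_image.mp hw
  refine ⟨n - kw + kv, ?_⟩
  rw [Function.iterate_add_apply, ← hkwa, ← Function.iterate_add_apply,
    Nat.sub_add_cancel (mem_range.mp hkw).le]
  exact isPeriodicPt_cycShift w

lemma sum_hWeight_eq_sum_cycOrbit_card_smul (f : (Fin n → Bool) → M) (hf : f ∘ cycShift n = f)
    (r : ℕ) (R : Finset (Fin n → Bool)) (hwt : ∀ v ∈ R, hWeight v = r)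
    (hdistinct : ∀ v ∈ R, ∀ w ∈ R, (∃ k : ℕ, (cycShift n)^[k] v = w) → v = w)
    (hcover : ∀ v, hWeight v = r → ∃ w ∈ R, ∃ k : ℕ, (cycShift n)^[k] w = v) :
    ∑ v with hWeight v = r, f v = ∑ v ∈ R, #(cycOrbit n v) • f v := by
  have hunion : ({v | hWeight v = r} : Finset (Fin n → Bool)) = R.biUnion (cycOrbit n) := by
    ext a
    simp only [mem_filter, mem_univ, true_and, mem_biUnion, mem_cycOrbit_iff]
    constructor
    · exact hcover a
    · rintro ⟨v, hv, k, rfl⟩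
      rw [← hwt v hv]
      exact congrFun (Function.iterate_invariant hWeight_comp_cycShift k) v
  have hdisj : (R : Set (Fin n → Bool)).PairwiseDisjoint (cycOrbit n) := by
    refine fun v hv w hw hvw => disjoint_left.mpr fun a hav haw => hvw ?_
    exact hdistinct v hv w hw (exists_cycShift_iterate_eq_of_mem_cycOrbit hav haw)
  rw [hunion, sum_biUnion hdisj]
  refine sum_congr rfl fun v _ => ?_
  rw [← sum_const]
  refine sum_congr rfl fun a ha => ?_
  obtain ⟨k, rfl⟩ := mem_cycOrbit_iff.mp ha
  exact congrFun (Function.iterate_invariant hf k) v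

end Orbits

section Circulant

variable {n : ℕ} [NeZero n] {B : Fin n → Fin n → ℝ} {c : Fin n → ℝ}

lemma sum_sq_residual_cycShift (hB : ∀ i j, B i j = c (i - j)) (v : Fin n → Bool)
    (x : Fin n → ℝ) :
    ∑ i : Fin n, ((∑ j with cycShift n v j = true, x j * B i j) - 1) ^ 2
      = ∑ i : Fin n, ((∑ j with v j = true, x (j + 1) * B i j) - 1) ^ 2 := by
  have hcol : ∀ i, ∑ j with cycShift n v j = true, x j * B i j
      = ∑ j with v j = true, x (j + 1) * B (i - 1) j := by
    intro i
    rw [sum_filter, sum_filter]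
    refine Fintype.sum_equiv (Equiv.subRight (1 : Fin n)) _ _ fun j => ?_
    simp [cycShift, hB]
  simp only [hcol]
  exact Fintype.sum_equiv (Equiv.subRight (1 : Fin n)) _ _ fun _ => rfl

lemma errCols_cycShift (hB : ∀ i j, B i j = c (i - j)) (v : Fin n → Bool) :
    errCols B (cycShift n v) = errCols B v := by
  unfold errCols
  congr 1
  ext e
  simp only [Set.mem_ofPred_eq, sum_sq_residual_cycShift hB]
  constructor
  · rintro ⟨x, rfl⟩
    exact ⟨fun j => x (j + 1), rfl⟩
  · rintro ⟨x, rfl⟩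
    exact ⟨fun j => x (j - 1), by simp⟩

end Circulant

noncomputable def weightAverage {n : ℕ} (f : (Fin n → Bool) → ℝ) (r : ℕ) : ℝ :=
  (n.choose r : ℝ)⁻¹ * ∑ v with hWeight v = r, f v

lemma sum_perm_comp_symm_eq_factorial_mul_weightAverage {n : ℕ} (f : (Fin n → Bool) → ℝ)
    (u : Fin n → Bool) :
    ∑ π : Equiv.Perm (Fin n), f (fun j => u (π.symm j))
      = n.factorial * weightAverage f (hWeight u) := by
  have hchoose : (n.choose (hWeight u) : ℝ) ≠ 0 := by
    exact_mod_cast (Nat.choose_pos (hWeight_le u)).ne'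
  have h := choose_smul_sum_perm_comp_symm f u
  simp only [nsmul_eq_mul] at h
  rw [weightAverage, ← mul_assoc, mul_right_comm, ← h, mul_right_comm, mul_inv_cancel₀ hchoose,
    one_mul]

lemma weightAverage_eq_sum_cycOrbit {n : ℕ} [NeZero n] (f : (Fin n → Bool) → ℝ)
    (hf : f ∘ cycShift n = f) (r : ℕ) (R : Finset (Fin n → Bool)) (hwt : ∀ v ∈ R, hWeight v = r)
    (hdistinct : ∀ v ∈ R, ∀ w ∈ R, (∃ k : ℕ, (cycShift n)^[k] v = w) → v = w)
    (hcover : ∀ v, hWeight v = r → ∃ w ∈ R, ∃ k : ℕ, (cycShift n)^[k] w = v) :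
    weightAverage f r = ∑ v ∈ R, ((#(cycOrbit n v) : ℝ) / (n.choose r : ℝ)) * f v := by
  rw [weightAverage, sum_hWeight_eq_sum_cycOrbit_card_smul f hf r R hwt hdistinct hcover, mul_sum]
  exact sum_congr rfl fun v _ => by rw [nsmul_eq_mul]; ring

section GeneratingFunction

open Polynomial

variable {n : ℕ} {R : Type*} [CommSemiring R]

lemma prod_C_add_C_mul_X (p q : Fin n → R) :
    ∏ i, (C (p i) + C (q i) * X)
      = ∑ u : Fin n → Bool, C (∏ i, if u i then q i else p i) * X ^ hWeight u := by
  have hfactor : ∀ u : Fin n → Bool, ∀ i,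
      (if u i then C (q i) * X else C (p i))
        = C (if u i then q i else p i) * X ^ (if u i then 1 else 0) := by
    intro u i
    split_ifs <;> simp
  calc ∏ i, (C (p i) + C (q i) * X)
      = ∏ i, ∑ b : Bool, (if b then C (q i) * X else C (p i)) := by
        simp [add_comm]
    _ = ∑ u : Fin n → Bool, ∏ i, (if u i then C (q i) * X else C (p i)) := Fintype.prod_sum _
    _ = ∑ u : Fin n → Bool, C (∏ i, if u i then q i else p i) * X ^ hWeight u := by
        simp only [hfactor, prod_mul_distrib, map_prod, prod_pow_eq_pow_sum, hWeight,
          card_filter]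

lemma sum_prod_ite_mul_hWeight (p q : Fin n → R) (g : ℕ → R) :
    ∑ u : Fin n → Bool, (∏ i, if u i then q i else p i) * g (hWeight u)
      = ∑ r ∈ range (n + 1), (∏ i, (C (p i) + C (q i) * X)).coeff r * g r := by
  simp only [prod_C_add_C_mul_X, finsetSum_coeff, coeff_C_mul_X_pow, sum_mul, ite_mul, zero_mul]
  rw [sum_comm]
  refine sum_congr rfl fun u _ => ?_
  rw [sum_ite_eq' (range (n + 1)), if_pos (mem_range_succ_iff.mpr (hWeight_le u))]

end GeneratingFunction

lemma prod_fin_apply_ite_lt {α M : Type*} [CommMonoid M] {m n : ℕ} (hm : m ≤ n) (f : α → M)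
    (x y : α) :
    ∏ i : Fin n, f (if (i : ℕ) < m then x else y) = f x ^ m * f y ^ (n - m) := by
  obtain ⟨d, rfl⟩ := Nat.exists_eq_add_of_le hm
  rw [Fin.prod_univ_eq_prod_range (fun i => f (if i < m then x else y)), prod_range_add,
    Nat.add_sub_cancel_left]
  congr 1
  · exact (prod_congr rfl fun i hi => by rw [if_pos (mem_range.mp hi)]).trans (by simp)
  · exact (prod_congr rfl fun i _ => by rw [if_neg (by omega)]).trans (by simp)

section BinomialCoefficients

open Polynomial

variable {R : Type*} [CommSemiring R]

lemma coeff_C_add_C_mul_X_pow (a b : R) (k i : ℕ) :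
    ((C b + C a * X) ^ k).coeff i = k.choose i * a ^ i * b ^ (k - i) := by
  have hcomp : (C b + C a * X) ^ k = ((X + C b) ^ k).comp (C a * X) := by
    simp [add_comm]
  rw [hcomp, comp_C_mul_X_coeff, coeff_X_add_C_pow]
  ring

lemma coeff_C_add_C_mul_X_pow_mul_pow (a b c d : R) (m k r : ℕ) :
    ((C b + C a * X) ^ m * (C d + C c * X) ^ k).coeff r
      = ∑ i ∈ range (r + 1), (m.choose i : R) * (k.choose (r - i) : R) *
          a ^ i * b ^ (m - i) * c ^ (r - i) * d ^ (k - (r - i)) := by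
  rw [coeff_mul, Nat.sum_antidiagonal_eq_sum_range_succ_mk]
  refine sum_congr rfl fun i _ => ?_
  rw [coeff_C_add_C_mul_X_pow, coeff_C_add_C_mul_X_pow]
  ring

end BinomialCoefficients

theorem crc_expected_error_heterogeneous_shuffling_general
    (n s m : ℕ) [NeZero n] (hm : m ≤ n)
    (p_ss p_as : ℝ)
    (B : Fin n → Fin n → ℝ) (c : Fin n → ℝ)
    (hB : ∀ i j : Fin n, B i j = c (i - j))
    (htol : ∀ v : Fin n → Bool, n - s + 1 ≤ hWeight v → errCols B v = 0)
    (reps : ℕ → Finset (Fin n → Bool))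
    (hwt : ∀ r, ∀ v ∈ reps r, hWeight v = r)
    (hdistinct : ∀ r, ∀ v ∈ reps r, ∀ w ∈ reps r,
      (∃ k : ℕ, (cycShift n)^[k] v = w) → v = w)
    (hcover : ∀ v : Fin n → Bool,
      ∃ w ∈ reps (hWeight v), ∃ k : ℕ, (cycShift n)^[k] w = v) :
    ∑ π : Equiv.Perm (Fin n), ∑ ω : Fin n → Bool,
      ((n.factorial : ℝ)⁻¹ *
        ∏ i : Fin n,
          (if ω i then (if (i : ℕ) < m then p_ss else p_as)
           else 1 - (if (i : ℕ) < m then p_ss else p_as))) *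
      errCols B (fun j => !ω (π.symm j))
    = ∑ r ∈ Finset.range (n - s + 1),
        (∑ i ∈ Finset.range (r + 1),
          (m.choose i : ℝ) * ((n - m).choose (r - i) : ℝ) *
            (1 - p_ss) ^ i * p_ss ^ (m - i) *
            (1 - p_as) ^ (r - i) * p_as ^ (n - m - (r - i))) *
        ∑ v ∈ reps r, (((cycOrbit n v).card : ℝ) / (n.choose r : ℝ)) *
          errCols B v := by
  set p : Fin n → ℝ := fun i => if (i : ℕ) < m then p_ss else p_as
  set Q : Polynomial ℝ := ∏ i, (Polynomial.C (p i) + Polynomial.C (1 - p i) * Polynomial.X)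
    with hQ
  set G := weightAverage (errCols B) with hG
  have hG_tol (r : ℕ) (hr : n - s + 1 ≤ r) : G r = 0 := by
    rw [hG, weightAverage, sum_eq_zero fun v hv => htol v (by rwa [(mem_filter.mp hv).2]),
      mul_zero]
  calc _ = ∑ ω : Fin n → Bool, (∏ i, if ω i then p i else 1 - p i) * G (hWeight fun i => !ω i) := by
        rw [sum_comm]
        refine sum_congr rfl fun ω _ => ?_
        rw [← mul_sum, sum_perm_comp_symm_eq_factorial_mul_weightAverage _ fun i => !ω i,
          mul_mul_mul_comm, inv_mul_cancel₀ (by positivity), one_mul]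
    _ = ∑ u : Fin n → Bool, (∏ i, if u i then 1 - p i else p i) * G (hWeight u) := by
        refine Fintype.sum_equiv (Equiv.piCongrRight fun _ => Equiv.boolNot) _ _ fun ω => ?_
        congr 1
        exact prod_congr rfl fun i _ => by cases h : ω i <;> simp [h, Equiv.boolNot]
    _ = ∑ r ∈ range (n + 1), Q.coeff r * G r := sum_prod_ite_mul_hWeight _ _ _
    _ = ∑ r ∈ range (n - s + 1), Q.coeff r * G r := by
        refine (sum_subset (range_subset_range.mpr (Nat.succ_le_succ (Nat.sub_le n s)))
          fun r _ hr => ?_).symm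
        rw [hG_tol r (by simpa using hr), mul_zero]
    _ = _ := by
        refine sum_congr rfl fun r _ => ?_
        rw [hG, weightAverage_eq_sum_cycOrbit _ (funext (errCols_cycShift hB)) r (reps r) (hwt r)
            (hdistinct r) (fun v hv => hv ▸ hcover v), hQ,
          prod_fin_apply_ite_lt hm (fun x => Polynomial.C x + Polynomial.C (1 - x) * Polynomial.X),
          coeff_C_add_C_mul_X_pow_mul_pow]

theorem crc_expected_error_heterogeneous_shuffling
    (n s m : ℕ) [NeZero n] (hs1 : 1 ≤ s) (hsn : s ≤ n) (hm : m ≤ n)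
    (p_ss p_as : ℝ)
    (hss0 : 0 ≤ p_ss) (hss1 : p_ss ≤ 1) (has0 : 0 ≤ p_as) (has1 : p_as ≤ 1)
    (B : Fin n → Fin n → ℝ) (c : Fin n → ℝ)
    (hB : ∀ i j : Fin n, B i j = c (i - j))
    (htol : ∀ v : Fin n → Bool, n - s + 1 ≤ hWeight v → errCols B v = 0)
    (reps : ℕ → Finset (Fin n → Bool))
    (hwt : ∀ r, ∀ v ∈ reps r, hWeight v = r)
    (hdistinct : ∀ r, ∀ v ∈ reps r, ∀ w ∈ reps r,
      (∃ k : ℕ, (cycShift n)^[k] v = w) → v = w)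
    (hcover : ∀ v : Fin n → Bool,
      ∃ w ∈ reps (hWeight v), ∃ k : ℕ, (cycShift n)^[k] w = v) :
    ∑ π : Equiv.Perm (Fin n), ∑ ω : Fin n → Bool,
      ((n.factorial : ℝ)⁻¹ *
        ∏ i : Fin n,
          (if ω i then (if (i : ℕ) < m then p_ss else p_as)
           else 1 - (if (i : ℕ) < m then p_ss else p_as))) *
      errCols B (fun j => !ω (π.symm j))
    = ∑ r ∈ Finset.range (n - s + 1),
        (∑ i ∈ Finset.range (r + 1),
          (m.choose i : ℝ) * ((n - m).choose (r - i) : ℝ) *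
            (1 - p_ss) ^ i * p_ss ^ (m - i) *
            (1 - p_as) ^ (r - i) * p_as ^ (n - m - (r - i))) *
        ∑ v ∈ reps r, (((cycOrbit n v).card : ℝ) / (n.choose r : ℝ)) *
          errCols B v :=
  crc_expected_error_heterogeneous_shuffling_general n s m hm p_ss p_as B c hB htol reps hwt
    hdistinct hcover
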